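/- Let T > 0 and let Φ(s) = Σ_{k=1}^K β_k · exp(−m_k·T·s) with real β_k not all zero and distinct positive integers m_k, and assume |Φ(iω)| ≤ 1 for every real ω. Let ω_b > 0. Then the open-loop transfer function Γ(s) = (ω_c·L/2)·((1+Φ(s))/(1−Φ(s)))·(ω_b/(s+ω_b)) has no poles in the open right half-plane: for every complex s with Re s > 0 one has 1 − Φ(s) ≠ 0 and s + ω_b ≠ 0. -/

import Mathlib

/-!
Writing `z = exp (-T s)`, the delay sum is `Φ s = P z` for the polynomial
`P z = ∑ β_k z ^ m_k` (`delayPoly β m`), and `Re s > 0` means `‖z‖ < 1`. The imaginary axis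
is mapped onto the unit circle, so `‖P‖ ≤ 1` there. Since every `m_k > 0`, `P 0 = 0`, so `P`
is not a unimodular constant and the maximum modulus principle gives `‖P z‖ < 1` in the open
disc; hence `Φ s ≠ 1`.
-/

open Complex Metric Set

theorem Complex.norm_lt_of_norm_le_on_sphere {E F : Type*} [NormedAddCommGroup E] [NormedSpace ℂ E]
    [NormedAddCommGroup F] [NormedSpace ℂ F] [StrictConvexSpace ℝ F] {f : E → F} {c z : E}
    {r C : ℝ} (hf : DiffContOnCl ℂ f (ball c r)) (hC : ∀ w ∈ sphere c r, ‖f w‖ ≤ C)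
    (hc : ‖f c‖ < C) (hz : z ∈ ball c r) : ‖f z‖ < C := by
  rcases subsingleton_or_nontrivial E with hE | hE
  · rwa [Subsingleton.elim z c]
  have hr : r ≠ 0 := (pos_of_mem_ball hz).ne'
  have hle : ∀ w ∈ ball c r, ‖f w‖ ≤ C := fun w hw =>
    norm_le_of_forall_mem_frontier_norm_le isBounded_ball hf
      (by rwa [frontier_ball c hr]) (subset_closure hw)
  refine (hle z hz).lt_of_ne fun hzC => hc.ne ?_
  have hmax : IsMaxOn (norm ∘ f) (ball c r) z := fun w hw => by
    simpa [hzC] using hle w hw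
  rw [eqOn_of_isPreconnected_of_isMaxOn_norm (convex_ball c r).isPreconnected isOpen_ball
    hf.differentiableOn hz hmax (mem_ball_self (pos_of_mem_ball hz))]
  exact hzC

theorem Complex.exists_exp_neg_mul_I_eq {T : ℝ} (hT : T ≠ 0) {z : ℂ} (hz : ‖z‖ = 1) :
    ∃ ω : ℝ, exp (-(T * (I * ω))) = z := by
  refine ⟨-z.arg / T, ?_⟩
  have hT' : (T : ℂ) ≠ 0 := ofReal_ne_zero.mpr hT
  have : -((T : ℂ) * (I * ((-z.arg / T : ℝ) : ℂ))) = z.arg * I := by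
    push_cast
    field_simp
  rw [this]
  conv_rhs => rw [← norm_mul_exp_arg_mul_I z, hz]
  simp

section

variable {ι : Type*} [Fintype ι] (β : ι → ℝ) (m : ι → ℕ)

noncomputable def delayPoly (z : ℂ) : ℂ := ∑ k, (β k : ℂ) * z ^ m k

theorem differentiable_delayPoly : Differentiable ℂ (delayPoly β m) := by
  unfold delayPoly
  fun_prop

variable {m}

theorem delayPoly_zero (hm : ∀ k, m k ≠ 0) : delayPoly β m 0 = 0 :=
  Finset.sum_eq_zero fun k _ => by simp [hm k]

theorem sum_mul_exp_eq_delayPoly (T : ℝ) (s : ℂ) :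
    ∑ k, (β k : ℂ) * exp (-((m k : ℂ) * T * s)) = delayPoly β m (exp (-(T * s))) := by
  refine Finset.sum_congr rfl fun k _ => ?_
  rw [← Complex.exp_nat_mul]
  ring_nf

end

theorem stmt2_general
    (T : ℝ) (hT : 0 < T)
    (K : ℕ)
    (β : Fin K → ℝ)
    (m : Fin K → ℕ) (hm : ∀ k, 0 < m k)
    (Φ : ℂ → ℂ)
    (hΦ : ∀ s : ℂ, Φ s = ∑ k : Fin K, (β k : ℂ) * Complex.exp (-((m k : ℂ) * (T : ℂ) * s)))
    (hbound : ∀ ω : ℝ, ‖Φ (Complex.I * (ω : ℂ))‖ ≤ 1)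
    (ωb : ℝ) (hωb : 0 < ωb) :
    ∀ s : ℂ, 0 < s.re → (1 - Φ s ≠ 0 ∧ s + (ωb : ℂ) ≠ 0) := by
  intro s hs
  have hΦP : ∀ w, Φ w = delayPoly β m (exp (-(T * w))) := fun w => by
    rw [hΦ, sum_mul_exp_eq_delayPoly]
  have hsphere : ∀ z ∈ sphere (0 : ℂ) 1, ‖delayPoly β m z‖ ≤ 1 := by
    intro z hz
    obtain ⟨ω, rfl⟩ := exists_exp_neg_mul_I_eq hT.ne' (mem_sphere_zero_iff_norm.mp hz)
    simpa only [hΦP] using hbound ω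
  have hexp : exp (-(T * s)) ∈ ball (0 : ℂ) 1 := by
    rw [mem_ball_zero_iff, norm_exp, Real.exp_lt_one_iff]
    simpa using mul_pos hT hs
  have hΦs : ‖Φ s‖ < 1 := by
    rw [hΦP]
    refine norm_lt_of_norm_le_on_sphere (differentiable_delayPoly β m).diffContOnCl hsphere
      ?_ hexp
    simp [delayPoly_zero β fun k => (hm k).ne']
  refine ⟨fun h => ?_, fun h => ?_⟩
  · rw [sub_eq_zero.mp h |>.symm, norm_one] at hΦs
    exact lt_irrefl 1 hΦs
  · have hre := congrArg re h
    simp only [add_re, ofReal_re, zero_re] at hre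
    linarith

/-- The open-loop transfer function
`Γ(s) = (ω_c L/2)·((1+Φ(s))/(1−Φ(s)))·(ω_b/(s+ω_b))` has no poles in the open right
half-plane: `1 − Φ(s) ≠ 0` and `s + ω_b ≠ 0` whenever `Re s > 0`. -/
theorem stmt2
    (T : ℝ) (hT : 0 < T)
    (K : ℕ) (hK : 1 ≤ K)
    (β : Fin K → ℝ) (hβ : ∃ k, β k ≠ 0)
    (m : Fin K → ℕ) (hm : ∀ k, 0 < m k) (hm_inj : Function.Injective m)
    (Φ : ℂ → ℂ)
    (hΦ : ∀ s : ℂ, Φ s = ∑ k : Fin K, (β k : ℂ) * Complex.exp (-((m k : ℂ) * (T : ℂ) * s)))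
    (hbound : ∀ ω : ℝ, ‖Φ (Complex.I * (ω : ℂ))‖ ≤ 1)
    (ωb ωc L : ℝ) (hωb : 0 < ωb) (hωc : 0 < ωc) (hL : 0 < L) :
    ∀ s : ℂ, 0 < s.re → (1 - Φ s ≠ 0 ∧ s + (ωb : ℂ) ≠ 0) :=
  stmt2_general T hT K β m hm Φ hΦ hbound ωb hωb
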